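/- arXiv:2011.07399 — 2 statements merged into one kernel-verified Lean document; each statement's English description precedes it below -/
import Mathlib

section
/- Let P be a finite patchwork on a set Ω and let A be a nonempty subset of Ω. Then A ∈ P if and only if A can be written as the union of a family F of autonomous members of P whose adjacency graph (the simple graph on F with an edge between two distinct members exactly when they are adjacent) is connected. -/
/-- A subset `A` is convex with respect to an order relation `le` if whenever
`p ≤ q ≤ r` with `p ∈ A` and `r ∈ A`, also `q ∈ A`. -/
def IsConvex {Ω : Type*} (le : Ω → Ω → Prop) (A : Set Ω) : Prop :=
  ∀ p q r : Ω, le p q → le q r → p ∈ A → r ∈ A → q ∈ A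

/-- Two subsets overlap if they have nonempty intersection and neither contains the other. -/
def Overlap {Ω : Type*} (A B : Set Ω) : Prop :=
  (A ∩ B).Nonempty ∧ ¬ A ⊆ B ∧ ¬ B ⊆ A

/-- A patchwork on `Ω` is a set of subsets of `Ω` containing `∅` and `Ω` and closed under
intersection, union and difference of overlapping pairs. -/
def IsPatchwork {Ω : Type*} (P : Set (Set Ω)) : Prop :=
  ∅ ∈ P ∧ Set.univ ∈ P ∧
    ∀ A ∈ P, ∀ B ∈ P, Overlap A B → A ∩ B ∈ P ∧ A ∪ B ∈ P ∧ A \ B ∈ P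

/-- A member of a patchwork is autonomous if it is nonempty and overlaps no member. -/
def Autonomous {Ω : Type*} (P : Set (Set Ω)) (A : Set Ω) : Prop :=
  A ∈ P ∧ A.Nonempty ∧ ∀ B ∈ P, ¬ Overlap A B

/-- The cohort under `B`: the maximal autonomous proper subsets of `B`. -/
def Cohort {Ω : Type*} (P : Set (Set Ω)) (B : Set Ω) : Set (Set Ω) :=
  {A | Autonomous P A ∧ A ⊂ B ∧ ∀ C, Autonomous P C → C ⊂ B → A ⊆ C → A = C}

/-- Two members of a patchwork are adjacent if they are disjoint and their union is a member. -/
def Adjacent {Ω : Type*} (P : Set (Set Ω)) (A B : Set Ω) : Prop :=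
  Disjoint A B ∧ A ∪ B ∈ P

/-- The smallest patchwork on `Ω` containing `C`. -/
def patchworkClosure {Ω : Type*} (C : Set (Set Ω)) : Set (Set Ω) :=
  ⋂₀ {P | IsPatchwork P ∧ C ⊆ P}

/-- The adjacency graph of a family `F` of subsets: vertices are members of `F`, with an
edge between two distinct members exactly when they are disjoint and their union lies in `P`. -/
def adjGraph {Ω : Type*} (P : Set (Set Ω)) (F : Set (Set Ω)) : SimpleGraph F where
  Adj A B := A ≠ B ∧ Adjacent P (A : Set Ω) (B : Set Ω)
  symm := ⟨by
    rintro A B ⟨hne, hdisj, hun⟩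
    exact ⟨hne.symm, hdisj.symm, by rwa [Set.union_comm]⟩⟩
  loopless := ⟨fun A h => h.1 rfl⟩

/-!
Two intersecting members of a patchwork have their union in it, so a connected family of
nonempty members can be glued together along its edges, one member at a time.

Conversely, write `A ∈ P` as the union of its maximal autonomous submembers, which cover `A`
because a minimal member containing a given point is autonomous. If `A` is not autonomous, it
overlaps some `B`, and its maximal autonomous submembers are those of `A ∩ B` together with
those of `A \ B`; by induction each of these two families is connected.
An edge between them comes from shrinking: if `X, Y ∈ P` and `X ∪ Y ∈ P`, a minimal nonempty
`C ⊆ X` with `C ∪ Y ∈ P` is autonomous, since cutting `C` along a member overlapping it would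
shrink it further. Shrinking `A ∩ B` against `A \ B` and then `A \ B` against the result gives
adjacent autonomous `C ⊆ A ∩ B` and `D ⊆ A \ B`, and adjacency forces both to be maximal.
-/

open Set

section

variable {Ω : Type*} {P F : Set (Set Ω)} {A B C D X Y Z : Set Ω}

namespace IsPatchwork

theorem inter_mem (hP : IsPatchwork P) (hA : A ∈ P) (hB : B ∈ P) : A ∩ B ∈ P := by
  by_cases hAB : A ⊆ B
  · rwa [inter_eq_left.2 hAB]
  by_cases hBA : B ⊆ A
  · rwa [inter_eq_right.2 hBA]
  rcases disjoint_or_nonempty_inter A B with h | h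
  · rw [h.inter_eq]; exact hP.1
  · exact (hP.2.2 A hA B hB ⟨h, hAB, hBA⟩).1

theorem union_mem (hP : IsPatchwork P) (hA : A ∈ P) (hB : B ∈ P) (h : (A ∩ B).Nonempty) :
    A ∪ B ∈ P := by
  by_cases hAB : A ⊆ B
  · rwa [union_eq_right.2 hAB]
  by_cases hBA : B ⊆ A
  · rwa [union_eq_left.2 hBA]
  exact (hP.2.2 A hA B hB ⟨h, hAB, hBA⟩).2.1

theorem sdiff_mem (hP : IsPatchwork P) (hA : A ∈ P) (hB : B ∈ P) (h : ¬ B ⊆ A) :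
    A \ B ∈ P := by
  by_cases hAB : A ⊆ B
  · rw [sdiff_eq_empty.2 hAB]; exact hP.1
  rcases disjoint_or_nonempty_inter A B with hd | hd
  · rwa [hd.sdiff_eq_left]
  · exact (hP.2.2 A hA B hB ⟨hd, hAB, h⟩).2.2

theorem union_mem_of_adjacent (hP : IsPatchwork P) (hX : X ∈ P) (hDX : D ⊆ X)
    (hD : D.Nonempty) (hDC : Adjacent P D C) : X ∪ C ∈ P := by
  have h := hP.union_mem hX hDC.2 (hD.mono (subset_inter hDX subset_union_left))
  rwa [← union_assoc, union_eq_self_of_subset_right hDX] at h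

theorem exists_ssubset_union_mem (hP : IsPatchwork P) (hX : X ∈ P) (hY : Y ∈ P)
    (hXY : X ∪ Y ∈ P) (hZ : Z ∈ P) (hXZ : Overlap X Z) :
    ∃ X' ∈ P, X'.Nonempty ∧ X' ⊂ X ∧ X' ∪ Y ∈ P := by
  rcases disjoint_or_nonempty_inter Y Z with hYZ | hYZ
  · have hZ_not_sub : ¬ Z ⊆ X ∪ Y := fun h =>
      hXZ.2.2 fun z hz => (h hz).resolve_right fun hzY => disjoint_left.1 hYZ hzY hz
    refine ⟨X \ Z, hP.sdiff_mem hX hZ hXZ.2.2, sdiff_nonempty.2 hXZ.2.1,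
      sdiff_ssubset_left_iff.2 hXZ.1, ?_⟩
    rw [← hYZ.sdiff_eq_left, ← union_sdiff_distrib]
    exact hP.sdiff_mem hXY hZ hZ_not_sub
  · refine ⟨X ∩ Z, hP.inter_mem hX hZ, hXZ.1,
      ⟨inter_subset_left, fun h => hXZ.2.1 (h.trans inter_subset_right)⟩, ?_⟩
    rw [inter_union_distrib_right]
    exact hP.inter_mem hXY (hP.union_mem hZ hY (inter_comm Y Z ▸ hYZ))

theorem exists_autonomous_subset_union_mem (hP : IsPatchwork P) (hfin : P.Finite)
    (hX : X ∈ P) (hXne : X.Nonempty) (hY : Y ∈ P) (hXY : X ∪ Y ∈ P) :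
    ∃ C, Autonomous P C ∧ C ⊆ X ∧ C ∪ Y ∈ P := by
  obtain ⟨C, hCX, hmin⟩ := (hfin.subset fun _ h => h.1 :
    {X' | X' ∈ P ∧ X'.Nonempty ∧ X' ∪ Y ∈ P}.Finite).exists_le_minimal ⟨hX, hXne, hXY⟩
  obtain ⟨hC, hCne, hCY⟩ := hmin.prop
  refine ⟨C, ⟨hC, hCne, fun Z hZ hCZ => ?_⟩, hCX, hCY⟩
  obtain ⟨C', hC', hC'ne, hC'C, hC'Y⟩ := hP.exists_ssubset_union_mem hC hY hCY hZ hCZ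
  exact hmin.not_prop_of_lt hC'C ⟨hC', hC'ne, hC'Y⟩

theorem exists_autonomous_mem_subset (hP : IsPatchwork P) (hfin : P.Finite) (hA : A ∈ P)
    {x : Ω} (hx : x ∈ A) : ∃ C, Autonomous P C ∧ x ∈ C ∧ C ⊆ A := by
  obtain ⟨C, hCA, hmin⟩ := (hfin.subset fun _ h => h.1 :
    {M | M ∈ P ∧ x ∈ M}.Finite).exists_le_minimal ⟨hA, hx⟩
  obtain ⟨hC, hxC⟩ := hmin.prop
  refine ⟨C, ⟨hC, ⟨x, hxC⟩, fun Z hZ hCZ => ?_⟩, hxC, hCA⟩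
  by_cases hxZ : x ∈ Z
  · exact hmin.not_prop_of_lt
      ⟨inter_subset_left, fun h => hCZ.2.1 (h.trans inter_subset_right)⟩
      ⟨hP.inter_mem hC hZ, hxC, hxZ⟩
  · exact hmin.not_prop_of_lt (sdiff_ssubset_left_iff.2 hCZ.1)
      ⟨hP.sdiff_mem hC hZ hCZ.2.2, hxC, hxZ⟩

end IsPatchwork

theorem Autonomous.subset_or_subset_of_inter_nonempty (hC : Autonomous P C) (hB : B ∈ P)
    (h : (C ∩ B).Nonempty) : C ⊆ B ∨ B ⊆ C := by
  by_contra! hCB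
  exact hC.2.2 B hB ⟨h, hCB.1, hCB.2⟩

theorem Autonomous.subset_inter_or_subset_sdiff (hC : Autonomous P C) (hB : B ∈ P)
    (hCA : C ⊆ A) (hBA : ¬ B ⊆ A) : C ⊆ A ∩ B ∨ C ⊆ A \ B := by
  rcases disjoint_or_nonempty_inter C B with h | h
  · exact Or.inr (subset_sdiff.2 ⟨hCA, h⟩)
  · rcases hC.subset_or_subset_of_inter_nonempty hB h with hCB | hBC
    · exact Or.inl (subset_inter hCA hCB)
    · exact absurd (hBC.trans hCA) hBA

def autonomousParts (P : Set (Set Ω)) (A : Set Ω) : Set (Set Ω) :=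
  {C | Maximal (fun C => Autonomous P C ∧ C ⊆ A) C}

theorem mem_autonomousParts :
    C ∈ autonomousParts P A ↔ Maximal (fun C => Autonomous P C ∧ C ⊆ A) C :=
  Iff.rfl

theorem autonomousParts_of_autonomous (hA : Autonomous P A) : autonomousParts P A = {A} := by
  ext C
  rw [mem_autonomousParts, mem_singleton_iff]
  refine ⟨fun hC => subset_antisymm hC.prop.2 (hC.2 ⟨hA, subset_rfl⟩ hC.prop.2), ?_⟩
  rintro rfl
  exact ⟨⟨hA, subset_rfl⟩, fun _ h _ => h.2⟩

theorem IsPatchwork.sUnion_autonomousParts (hP : IsPatchwork P) (hfin : P.Finite)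
    (hA : A ∈ P) : ⋃₀ autonomousParts P A = A := by
  refine subset_antisymm (sUnion_subset fun C hC => (mem_autonomousParts.1 hC).prop.2)
    fun x hx => ?_
  obtain ⟨C, hC, hxC, hCA⟩ := hP.exists_autonomous_mem_subset hfin hA hx
  obtain ⟨C', hCC', hC'⟩ := (hfin.subset fun _ h => h.1.1 :
    {C | Autonomous P C ∧ C ⊆ A}.Finite).exists_le_maximal ⟨hC, hCA⟩
  exact ⟨C', hC', hCC' hxC⟩

theorem autonomousParts_union (hXY : Disjoint X Y)
    (hsplit : ∀ C, Autonomous P C → C ⊆ X ∪ Y → C ⊆ X ∨ C ⊆ Y) :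
    autonomousParts P (X ∪ Y) = autonomousParts P X ∪ autonomousParts P Y := by
  ext C
  simp only [mem_union, mem_autonomousParts]
  refine ⟨fun hC => ?_, fun hC => ?_⟩
  · obtain ⟨hCaut, hCXY⟩ := hC.prop
    rcases hsplit C hCaut hCXY with h | h
    · exact Or.inl (hC.mono (fun _ hD => ⟨hD.1, hD.2.trans subset_union_left⟩) ⟨hCaut, h⟩)
    · exact Or.inr (hC.mono (fun _ hD => ⟨hD.1, hD.2.trans subset_union_right⟩) ⟨hCaut, h⟩)
  -- a part of `X` inside a part of `Y` would be empty
  · rcases hC with hC | hC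
    · refine ⟨⟨hC.prop.1, hC.prop.2.trans subset_union_left⟩, fun D hD hCD => ?_⟩
      rcases hsplit D hD.1 hD.2 with h | h
      · exact hC.2 ⟨hD.1, h⟩ hCD
      · exact (hC.prop.1.2.1.ne_empty (disjoint_self.1 (hXY.mono hC.prop.2 (hCD.trans h)))).elim
    · refine ⟨⟨hC.prop.1, hC.prop.2.trans subset_union_right⟩, fun D hD hCD => ?_⟩
      rcases hsplit D hD.1 hD.2 with h | h
      · exact (hC.prop.1.2.1.ne_empty (disjoint_self.1 (hXY.mono (hCD.trans h) hC.prop.2))).elim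
      · exact hC.2 ⟨hD.1, h⟩ hCD

theorem mem_autonomousParts_of_union_mem (hC : Autonomous P C) (hCX : C ⊆ X)
    (hD : D.Nonempty) (hDX : Disjoint D X) (hCD : C ∪ D ∈ P) : C ∈ autonomousParts P X := by
  refine ⟨⟨hC, hCX⟩, fun C' ⟨hC', hC'X⟩ hCC' => ?_⟩
  rcases hC'.subset_or_subset_of_inter_nonempty hCD
      (hC.2.1.mono (subset_inter hCC' subset_union_left)) with h | h
  · exact fun x hx => (h hx).resolve_right fun hxD => disjoint_left.1 hDX hxD (hC'X hx)
  · obtain ⟨d, hd⟩ := hD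
    exact absurd (hC'X (h (Or.inr hd))) (disjoint_left.1 hDX hd)

theorem IsPatchwork.exists_adjacent_autonomousParts (hP : IsPatchwork P) (hfin : P.Finite)
    (hX : X ∈ P) (hY : Y ∈ P) (hXne : X.Nonempty) (hYne : Y.Nonempty) (hXY : Disjoint X Y)
    (hXuY : X ∪ Y ∈ P) :
    ∃ C ∈ autonomousParts P X, ∃ D ∈ autonomousParts P Y, Adjacent P C D := by
  obtain ⟨C, hC, hCX, hCY⟩ := hP.exists_autonomous_subset_union_mem hfin hX hXne hY hXuY
  obtain ⟨D, hD, hDY, hDC⟩ := hP.exists_autonomous_subset_union_mem hfin hY hYne hC.1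
    (union_comm C Y ▸ hCY)
  have hCD : C ∪ D ∈ P := union_comm D C ▸ hDC
  exact ⟨C, mem_autonomousParts_of_union_mem hC hCX hD.2.1 (hXY.symm.mono_left hDY) hCD,
    D, mem_autonomousParts_of_union_mem hD hDY hC.2.1 (hXY.mono_left hCX) hDC,
    hXY.mono hCX hDY, hCD⟩

def adjacencyGraph (P : Set (Set Ω)) : SimpleGraph (Set Ω) where
  Adj A B := A ≠ B ∧ Adjacent P A B
  symm := ⟨fun _ _ h => ⟨h.1.symm, h.2.1.symm, union_comm _ _ ▸ h.2.2⟩⟩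
  loopless := ⟨fun _ h => h.1 rfl⟩

def adjGraphIsoInduce (P F : Set (Set Ω)) : adjGraph P F ≃g (adjacencyGraph P).induce F where
  toEquiv := Equiv.refl F
  map_rel_iff' {A B} := by
    show (A.1 ≠ B.1 ∧ _) ↔ (A ≠ B ∧ _)
    rw [Ne, Ne, Subtype.ext_iff]
    exact Iff.rfl

theorem adjGraph_connected_iff :
    (adjGraph P F).Connected ↔ ((adjacencyGraph P).induce F).Connected :=
  (adjGraphIsoInduce P F).connected_iff

theorem adjGraph_singleton_connected : (adjGraph P {A}).Connected := by
  rw [adjGraph_connected_iff, SimpleGraph.induce_singleton_eq_top]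
  exact SimpleGraph.connected_top

theorem adjGraph_union_connected {F₁ F₂ : Set (Set Ω)} (h₁ : (adjGraph P F₁).Connected)
    (h₂ : (adjGraph P F₂).Connected) (hC : C ∈ F₁) (hD : D ∈ F₂)
    (hCD : (adjacencyGraph P).Adj C D) : (adjGraph P (F₁ ∪ F₂)).Connected := by
  rw [adjGraph_connected_iff] at *
  have h : ((adjacencyGraph P).induce (F₁ ∪ {C, D})).Connected :=
    SimpleGraph.induce_union_connected h₁.preconnected
      (SimpleGraph.induce_pair_connected_of_adj hCD).preconnected ⟨C, hC, Or.inl rfl⟩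
  have h' := SimpleGraph.induce_union_connected h.preconnected h₂.preconnected
    ⟨D, Or.inr (Or.inr rfl), hD⟩
  rwa [union_right_comm, union_eq_left.2 (insert_subset (mem_union_left _ hC)
    (singleton_subset_iff.2 (mem_union_right _ hD)))] at h'

theorem IsPatchwork.sUnion_mem_of_connected (hP : IsPatchwork P) (hF : F.Finite) (hFP : F ⊆ P)
    (hFne : ∀ C ∈ F, C.Nonempty) (hconn : (adjGraph P F).Connected) : ⋃₀ F ∈ P := by
  obtain ⟨⟨C₀, hC₀⟩⟩ := hconn.nonempty
  have hC₀P : ⋃₀ {C₀} ∈ P := (sUnion_singleton C₀).symm ▸ hFP hC₀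
  obtain ⟨S, hC₀S, hS⟩ := (hF.finite_subsets.subset fun _ h => h.1 :
    {S | S ⊆ F ∧ C₀ ∈ S ∧ ⋃₀ S ∈ P}.Finite).exists_le_maximal
      (a := {C₀}) ⟨singleton_subset_iff.2 hC₀, rfl, hC₀P⟩
  obtain ⟨hSF, -, hSP⟩ := hS.prop
  suffices hFS : F ⊆ S by rwa [subset_antisymm hSF hFS] at hSP
  intro C hCF
  by_contra hCS
  obtain ⟨p⟩ := hconn.preconnected ⟨C₀, hC₀⟩ ⟨C, hCF⟩
  obtain ⟨d, -, hd₁, hd₂⟩ :=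
    p.exists_boundary_dart {E | E.1 ∈ S} (hC₀S rfl) hCS
  refine hS.not_prop_of_gt (ssubset_insert hd₂) ⟨insert_subset d.snd.2 hSF,
    mem_insert_of_mem _ (hC₀S rfl), ?_⟩
  rw [sUnion_insert, union_comm]
  exact hP.union_mem_of_adjacent hSP (subset_sUnion_of_mem hd₁) (hFne _ d.fst.2) d.adj.2

theorem IsPatchwork.autonomousParts_connected (hP : IsPatchwork P) (hfin : P.Finite)
    (hA : A ∈ P) (hAne : A.Nonempty) : (adjGraph P (autonomousParts P A)).Connected := by
  revert hAne
  refine (hfin.wellFoundedOn (r := (· ⊂ ·))).induction hA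
    (P := fun A => A.Nonempty → (adjGraph P (autonomousParts P A)).Connected)
    fun A hA ih hAne => ?_
  by_cases hAut : Autonomous P A
  · rw [autonomousParts_of_autonomous hAut]
    exact adjGraph_singleton_connected
  obtain ⟨B, hB, hAB⟩ : ∃ B ∈ P, Overlap A B := by
    simpa [Autonomous, hA, hAne] using hAut
  obtain ⟨hX, -, hY⟩ := hP.2.2 A hA B hB hAB
  have hXne : (A ∩ B).Nonempty := hAB.1
  have hYne : (A \ B).Nonempty := sdiff_nonempty.2 hAB.2.1
  have hXY : Disjoint (A ∩ B) (A \ B) := disjoint_sdiff_inter.symm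
  have hXuY : A ∩ B ∪ A \ B = A := inter_union_sdiff A B
  obtain ⟨C, hC, D, hD, hCD⟩ := hP.exists_adjacent_autonomousParts hfin hX hY hXne hYne hXY
    (by rwa [hXuY])
  rw [← hXuY, autonomousParts_union hXY fun C hC hCA =>
    hC.subset_inter_or_subset_sdiff hB (hXuY ▸ hCA) hAB.2.2]
  exact adjGraph_union_connected
    (ih _ hX ⟨inter_subset_left, fun h => hAB.2.1 (h.trans inter_subset_right)⟩ hXne)
    (ih _ hY (sdiff_ssubset_left_iff.2 hAB.1) hYne) hC hD
    ⟨hCD.1.ne (mem_autonomousParts.1 hC).prop.1.2.1.ne_empty, hCD⟩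

end

theorem statement9 {Ω : Type*} (P : Set (Set Ω)) (hP : IsPatchwork P) (hfin : P.Finite)
    (A : Set Ω) (hne : A.Nonempty) :
    A ∈ P ↔ ∃ F : Set (Set Ω), (∀ C ∈ F, Autonomous P C) ∧ A = ⋃₀ F ∧
      (adjGraph P F).Connected := by
  refine ⟨fun hA => ⟨autonomousParts P A, fun C hC => (mem_autonomousParts.1 hC).prop.1,
    (hP.sUnion_autonomousParts hfin hA).symm, hP.autonomousParts_connected hfin hA hne⟩, ?_⟩
  rintro ⟨F, hF, rfl, hconn⟩
  have hFP : F ⊆ P := fun C hC => (hF C hC).1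
  exact hP.sUnion_mem_of_connected (hfin.subset hFP) hFP (fun C hC => (hF C hC).2.1) hconn
end

section
/- Let n be a nonnegative integer, (Ω, ≤) a linearly ordered set, and C a set of at most n subsets of Ω each of which is convex with respect to ≤. Then the smallest patchwork on Ω containing C has at most 2n² − n + 2 elements. -/
/-!
A convex set `A` is the difference `↓A \ (↑A)ᶜ` of two lower sets, and in a linear order the
lower sets form a chain. For any chain `K` of sets, the differences `D \ E` of members of `K`,
together with `∅` and `Ω`, already form a patchwork: intersections, unions and differences of
overlapping such sets are again of this form, with `D` and `E` replaced by minima or maxima of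
the four sets involved. So the patchwork generated by `C` lies in the one built from a chain of
at most `2n` lower sets, whose nonempty differences are indexed by unordered pairs of distinct
members: at most `(2n).choose 2 + 2 = 2n² - n + 2` sets.
-/

open Set

namespace Set

variable {Ω : Type*} {D₁ E₁ D₂ E₂ : Set Ω}

theorem sdiff_union_sdiff_eq_of_inter_nonempty (h₁ : D₂ ⊆ E₁ ∨ E₁ ⊆ D₂) (h₂ : D₁ ⊆ E₂ ∨ E₂ ⊆ D₁)
    (hw : ((D₁ \ E₁) ∩ (D₂ \ E₂)).Nonempty) :
    (D₁ \ E₁) ∪ (D₂ \ E₂) = (D₁ ∪ D₂) \ (E₁ ∩ E₂) := by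
  obtain ⟨w, hw⟩ := hw
  ext x
  rcases h₁ with h₁ | h₁ <;> rcases h₂ with h₂ | h₂ <;>
    · have := @h₁ x; have := @h₁ w; have := @h₂ x; have := @h₂ w
      simp only [mem_union, mem_sdiff, mem_inter_iff] at *
      tauto

theorem sdiff_sdiff_sdiff_eq_of_mem_right {b : Ω} (h : E₁ ⊆ E₂ ∨ E₂ ⊆ E₁) (hb : b ∈ D₂ \ E₂)
    (hbE : b ∈ E₁) : (D₁ \ E₁) \ (D₂ \ E₂) = D₁ \ (E₁ ∪ D₂) := by
  ext x
  rcases h with h | h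
  · have := @h b; simp only [mem_union, mem_sdiff] at *; tauto
  · have := @h x; simp only [mem_union, mem_sdiff] at *; tauto

theorem sdiff_sdiff_sdiff_eq_of_notMem_left {b : Ω} (h : D₁ ⊆ D₂ ∨ D₂ ⊆ D₁) (hb : b ∈ D₂ \ E₂)
    (hbD : b ∉ D₁) : (D₁ \ E₁) \ (D₂ \ E₂) = (D₁ ∩ E₂) \ E₁ := by
  ext x
  rcases h with h | h
  · have := @h x; simp only [mem_inter_iff, mem_sdiff] at *; tauto
  · have := @h b; simp only [mem_inter_iff, mem_sdiff] at *; tauto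

end Set

section Chain

variable {Ω : Type*} {K : Set (Set Ω)}

theorem IsChain.inter_mem (hK : IsChain (· ⊆ ·) K) {D E : Set Ω} (hD : D ∈ K) (hE : E ∈ K) :
    D ∩ E ∈ K := by
  rcases hK.total hD hE with h | h
  · rwa [inter_eq_left.2 h]
  · rwa [inter_eq_right.2 h]

theorem IsChain.union_mem (hK : IsChain (· ⊆ ·) K) {D E : Set Ω} (hD : D ∈ K) (hE : E ∈ K) :
    D ∪ E ∈ K := by
  rcases hK.total hD hE with h | h
  · rwa [union_eq_right.2 h]
  · rwa [union_eq_left.2 h]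

def chainDiffs (K : Set (Set Ω)) : Set (Set Ω) :=
  insert ∅ (insert univ (image2 (· \ ·) K K))

theorem Overlap.symm {A B : Set Ω} (h : Overlap A B) : Overlap B A :=
  ⟨inter_comm A B ▸ h.1, h.2.2, h.2.1⟩

theorem Overlap.mem_image2_of_mem_chainDiffs {A B : Set Ω} (h : Overlap A B)
    (hA : A ∈ chainDiffs K) : A ∈ image2 (· \ ·) K K := by
  obtain ⟨⟨w, hwA, -⟩, -, hBA⟩ := h
  rcases hA with rfl | rfl | hA
  · exact absurd hwA (notMem_empty w)
  · exact absurd (subset_univ B) hBA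
  · exact hA

theorem IsChain.isPatchwork_chainDiffs (hK : IsChain (· ⊆ ·) K) : IsPatchwork (chainDiffs K) := by
  have mem {D E : Set Ω} (hD : D ∈ K) (hE : E ∈ K) : D \ E ∈ chainDiffs K :=
    mem_insert_of_mem _ (mem_insert_of_mem _ (mem_image2_of_mem hD hE))
  refine ⟨mem_insert _ _, mem_insert_of_mem _ (mem_insert _ _), fun A hA B hB hAB => ?_⟩
  obtain ⟨D₁, hD₁, E₁, hE₁, rfl⟩ := hAB.mem_image2_of_mem_chainDiffs hA
  obtain ⟨D₂, hD₂, E₂, hE₂, rfl⟩ := hAB.symm.mem_image2_of_mem_chainDiffs hB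
  refine ⟨?_, ?_, ?_⟩
  · have hinter : (D₁ \ E₁) ∩ (D₂ \ E₂) = (D₁ ∩ D₂) \ (E₁ ∪ E₂) := by
      ext; simp only [mem_inter_iff, mem_sdiff, mem_union]; tauto
    rw [hinter]
    exact mem (hK.inter_mem hD₁ hD₂) (hK.union_mem hE₁ hE₂)
  · rw [sdiff_union_sdiff_eq_of_inter_nonempty (hK.total hD₂ hE₁) (hK.total hD₁ hE₂) hAB.1]
    exact mem (hK.union_mem hD₁ hD₂) (hK.inter_mem hE₁ hE₂)
  · obtain ⟨b, hbB, hbA⟩ := not_subset.1 hAB.2.2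
    by_cases hbE : b ∈ E₁
    · rw [sdiff_sdiff_sdiff_eq_of_mem_right (hK.total hE₁ hE₂) hbB hbE]
      exact mem hD₁ (hK.union_mem hE₁ hD₂)
    · rw [sdiff_sdiff_sdiff_eq_of_notMem_left (hK.total hD₁ hD₂) hbB fun hbD => hbA ⟨hbD, hbE⟩]
      exact mem (hK.inter_mem hD₁ hE₂) hE₁

theorem IsChain.encard_chainDiffs_le (hK : IsChain (· ⊆ ·) K) {m : ℕ} (hm : K.encard ≤ m) :
    (chainDiffs K).encard ≤ (m.choose 2 + 2 : ℕ) := by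
  have hfin : K.Finite := finite_of_encard_le_coe hm
  set S := hfin.toFinset
  let symmDiff₂ : Sym2 (Set Ω) → Set Ω := Sym2.lift ⟨symmDiff, symmDiff_comm⟩
  set T := S.offDiag.image Sym2.mk.uncurry
  -- in a chain, a nonempty difference `D \ E` is the symmetric difference of `D ≠ E`
  have hsub : chainDiffs K ⊆ insert ∅ (insert univ (symmDiff₂ '' T)) := by
    rintro _ (rfl | rfl | ⟨D, hD, E, hE, rfl⟩)
    · exact mem_insert _ _
    · exact mem_insert_of_mem _ (mem_insert _ _)
    by_cases hDE : D ⊆ E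
    · exact .inl (sdiff_eq_empty.2 hDE)
    · refine .inr (.inr ⟨s(D, E), ?_, symmDiff_of_ge ((hK.total hD hE).resolve_left hDE)⟩)
      refine Finset.mem_image_of_mem _ (Finset.mem_offDiag.2 ⟨?_, ?_, ?_⟩)
      · exact hfin.mem_toFinset.2 hD
      · exact hfin.mem_toFinset.2 hE
      · exact fun h => hDE h.le
  have hS : S.card ≤ m := by
    rwa [hfin.encard_eq_coe_toFinset_card, Nat.cast_le] at hm
  calc (chainDiffs K).encard ≤ (insert ∅ (insert univ (symmDiff₂ '' T))).encard :=
        encard_mono hsub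
    _ ≤ (symmDiff₂ '' T).encard + 1 + 1 :=
        (encard_insert_le _ _).trans (by gcongr; exact encard_insert_le _ _)
    _ ≤ (T.card : ℕ∞) + 1 + 1 := by
        gcongr; exact (encard_image_le _ _).trans (encard_coe_eq_coe_finsetCard T).le
    _ ≤ (m.choose 2 + 2 : ℕ) := by
      rw [Sym2.card_image_offDiag, add_assoc]
      exact_mod_cast Nat.add_le_add_right (Nat.choose_le_choose 2 hS) 2

end Chain

theorem patchworkClosure_subset {Ω : Type*} {C P : Set (Set Ω)} (hP : IsPatchwork P)
    (hCP : C ⊆ P) : patchworkClosure C ⊆ P :=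
  sInter_subset_of_mem ⟨hP, hCP⟩

theorem IsConvex.ordConnected {Ω : Type*} [Preorder Ω] {A : Set Ω}
    (h : IsConvex (· ≤ · : Ω → Ω → Prop) A) : A.OrdConnected :=
  ⟨fun _ hp _ hr _ hq => h _ _ _ hq.1 hq.2 hp hr⟩

theorem Set.OrdConnected.eq_lowerClosure_sdiff {Ω : Type*} [Preorder Ω] {A : Set Ω}
    (h : A.OrdConnected) : A = ↑(lowerClosure A) \ (↑(upperClosure A))ᶜ := by
  rw [sdiff_compl, inter_comm, h.upperClosure_inter_lowerClosure]

theorem isChain_of_forall_isLowerSet {Ω : Type*} [LinearOrder Ω] {K : Set (Set Ω)}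
    (hK : ∀ s ∈ K, IsLowerSet s) : IsChain (· ⊆ ·) K :=
  fun s hs t ht _ => (hK s hs).total (hK t ht)

theorem Nat.choose_two_mul_two (n : ℕ) : (2 * n).choose 2 = 2 * n ^ 2 - n := by
  rw [Nat.choose_two_right, mul_assoc, Nat.mul_div_cancel_left _ two_pos, Nat.mul_sub, mul_one]
  ring_nf

theorem statement17 {Ω : Type*} [LinearOrder Ω] (n : ℕ) (C : Set (Set Ω))
    (hC : C.encard ≤ (n : ℕ∞)) (hconv : ∀ A ∈ C, IsConvex (· ≤ · : Ω → Ω → Prop) A) :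
    (patchworkClosure C).encard ≤ ((2 * n ^ 2 - n + 2 : ℕ) : ℕ∞) := by
  set K : Set (Set Ω) :=
    (fun A => ↑(lowerClosure A)) '' C ∪ (fun A => (↑(upperClosure A))ᶜ) '' C
  have hKchain : IsChain (· ⊆ ·) K := isChain_of_forall_isLowerSet <| by
    rintro _ (⟨A, -, rfl⟩ | ⟨A, -, rfl⟩)
    exacts [(lowerClosure A).lower, (upperClosure A).upper.compl]
  have hKcard : K.encard ≤ (2 * n : ℕ) :=
    calc K.encard ≤ C.encard + C.encard :=
          (encard_union_le _ _).trans (add_le_add (encard_image_le _ _) (encard_image_le _ _))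
      _ ≤ (2 * n : ℕ) := by push_cast; rw [two_mul]; exact add_le_add hC hC
  have hCK : C ⊆ chainDiffs K := fun A hA => by
    rw [(hconv A hA).ordConnected.eq_lowerClosure_sdiff]
    exact mem_insert_of_mem _ <| mem_insert_of_mem _ <|
      mem_image2_of_mem (.inl ⟨A, hA, rfl⟩) (.inr ⟨A, hA, rfl⟩)
  calc (patchworkClosure C).encard ≤ (chainDiffs K).encard :=
        encard_mono (patchworkClosure_subset hKchain.isPatchwork_chainDiffs hCK)
    _ ≤ ((2 * n).choose 2 + 2 : ℕ) := hKchain.encard_chainDiffs_le hKcard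
    _ = ((2 * n ^ 2 - n + 2 : ℕ) : ℕ∞) := by rw [Nat.choose_two_mul_two]
end
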